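/- On the Lie algebra 𝔢(1,1)⊕𝔢(1,1) with structure equations dx¹ = dx² = 0, dx³ = −x¹∧x⁴, dx⁴ = −x¹∧x³, dx⁵ = x²∧x⁵, dx⁶ = −x²∧x⁶, the 2-form ω = x¹∧x² + x³∧x⁴ + x⁵∧x⁶ and the 3-form ψ₊ = x¹³⁵ − x¹⁴⁶ − x²³⁶ − x²⁴⁵ are both closed: dω = 0 and dψ₊ = 0. -/
import Mathlib


/- STATEMENT 13: On 𝔢(1,1)⊕𝔢(1,1) with dx¹=dx²=0, dx³=−x¹∧x⁴, dx⁴=−x¹∧x³,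
dx⁵=x²∧x⁵, dx⁶=−x²∧x⁶ (d extended as a graded antiderivation to Λ𝔤*),
the forms ω = x¹∧x²+x³∧x⁴+x⁵∧x⁶ and ψ₊ = x¹³⁵−x¹⁴⁶−x²³⁶−x²⁴⁵ are closed. -/

noncomputable section

abbrev E6 := ExteriorAlgebra ℝ (Fin 6 → ℝ)

/-- the basis one-forms x¹,…,x⁶ (0-indexed) -/
def x (i : Fin 6) : E6 := ExteriorAlgebra.ι ℝ (Pi.single i 1)

/-- ω = x¹∧x² + x³∧x⁴ + x⁵∧x⁶ -/
def ω : E6 := x 0 * x 1 + x 2 * x 3 + x 4 * x 5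

/-- ψ₊ = x¹³⁵ − x¹⁴⁶ − x²³⁶ − x²⁴⁵ -/
def ψp : E6 := x 0 * x 2 * x 4 - x 0 * x 3 * x 5 - x 1 * x 2 * x 5 - x 1 * x 3 * x 4

lemma xsq (i : Fin 6) : x i * x i = 0 := ExteriorAlgebra.ι_sq_zero _

lemma xswap (i j : Fin 6) : x i * x j = -(x j * x i) :=
  eq_neg_of_add_eq_zero_left (ExteriorAlgebra.ι_add_mul_swap _ _)

lemma sq3 (i : Fin 6) (w : E6) : x i * (x i * w) = 0 := by
  rw [← mul_assoc, xsq, zero_mul]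

lemma swapw (i j : Fin 6) (w : E6) : x i * (x j * w) = -(x j * (x i * w)) := by
  rw [← mul_assoc, xswap, neg_mul, mul_assoc]

theorem e11e11_omega_psiPlus_closed
    (d : E6 →ₗ[ℝ] E6)
    -- d is a graded derivation: on a product of a one-form with anything,
    -- d(α ∧ β) = dα ∧ β − α ∧ dβ
    (hder : ∀ (v : Fin 6 → ℝ) (w : E6),
        d (ExteriorAlgebra.ι ℝ v * w)
          = d (ExteriorAlgebra.ι ℝ v) * w - ExteriorAlgebra.ι ℝ v * d w)
    -- structure equations of 𝔢(1,1)⊕𝔢(1,1)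
    (h1 : d (x 0) = 0) (h2 : d (x 1) = 0)
    (h3 : d (x 2) = -(x 0 * x 3)) (h4 : d (x 3) = -(x 0 * x 2))
    (h5 : d (x 4) = x 1 * x 4) (h6 : d (x 5) = -(x 1 * x 5)) :
    d ω = 0 ∧ d ψp = 0 := by
  have hd : ∀ (i : Fin 6) (w : E6), d (x i * w) = d (x i) * w - x i * d w :=
    fun i w => hder _ _
  constructor
  · rw [ω, map_add, map_add, hd, hd, hd, h1, h2, h3, h4, h5, h6]
    simp only [mul_assoc, mul_neg, neg_mul, neg_neg, mul_zero, zero_mul, sub_zero, zero_sub,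
      sub_neg_eq_add]
    simp only [xsq, xswap 3 2, swapw 2 0, swapw 4 1, sq3, mul_zero, mul_neg, neg_zero,
      neg_neg, zero_add, add_zero, zero_mul]
    abel
  · rw [ψp, map_sub, map_sub, map_sub, mul_assoc, mul_assoc, mul_assoc, mul_assoc,
      hd, hd, hd, hd, hd, hd, hd, hd, h1, h2, h3, h4, h5, h6]
    simp only [mul_assoc, mul_neg, neg_mul, neg_neg, mul_zero, zero_mul, sub_zero, zero_sub,
      sub_neg_eq_add, sub_eq_add_neg, neg_add]
    simp only [sq3, swapw 2 1, swapw 3 1, swapw 1 0, swapw 2 0, swapw 3 0, swapw 4 1,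
      swapw 5 1, mul_neg, neg_neg, mul_zero, neg_zero, zero_add, add_zero]
    simp only [mul_add, mul_neg, sq3, swapw 1 0, neg_neg, neg_zero, zero_add, add_zero,
      mul_zero]
    abel
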